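/- arXiv:1510.06170 — 4 statements merged into one kernel-verified Lean document; each statement's English description precedes it below -/
import Mathlib

section
/- Let p be an odd prime, r₁, r₂, m integers with p ∤ r₁ r₂ m, and r₀ ≡ 0 (mod p). Then ∑_{y,z ∈ (ℤ/p)^×} (z/p) e((r₀ z̄ − r₁ y z̄ + r₂ m ȳ)/p) = (r₂m/p)(−r₁/p) · ε_p² · p, where ε_p = 1 if p ≡ 1 (mod 4) and ε_p = i otherwise. In particular its absolute value equals p. -/
/-!
Write `χ` for the Legendre character and `ψ` for the standard additive character of `ℤ/p`; with
`b = -r₁` and `c = r₂ m` the summand is `χ(z) ψ(b y z̄ + c ȳ)`. Since `χ` is its own inverse, the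
substitution `z ↦ z̄` turns the inner sum into the Gauss sum `g` twisted by `b y`, which equals
`χ(b y) g`. What remains is `χ(b) g ∑_y χ(y) ψ(c ȳ) = χ(b) χ(c) g²`, and `g² = χ(-1) p = ε_p² p`.
-/

noncomputable def e (x : ℝ) : ℂ := Complex.exp (2 * Real.pi * Complex.I * x)

open Finset

namespace MulChar

variable {F R : Type*} [Field F] [Fintype F] [CommRing R]

lemma sum_filter_ne_zero_mul [DecidableEq F] (χ : MulChar F R) (f : F → R) :
    ∑ a ∈ univ.filter (· ≠ 0), χ a * f a = ∑ a, χ a * f a :=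
  sum_filter_of_ne fun a _ h ha ↦ h (by rw [ha, χ.map_zero, zero_mul])

variable {χ : MulChar F R} (ψ : AddChar F R)

lemma IsQuadratic.sum_mul_addChar_mul_inv (hχ : χ.IsQuadratic) {a : F} (ha : a ≠ 0) :
    ∑ v, χ v * ψ (a * v⁻¹) = χ a * gaussSum χ ψ :=
  calc ∑ v, χ v * ψ (a * v⁻¹) = ∑ v, χ v⁻¹ * ψ (a * v) :=
        Fintype.sum_equiv (Equiv.inv F) _ _ fun v ↦ by simp
    _ = gaussSum χ (ψ.mulShift (Units.mk0 a ha)) := by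
        simp [← inv_apply', hχ.inv, gaussSum, AddChar.mulShift_apply]
    _ = χ a * gaussSum χ ψ := by rw [gaussSum_mulShift_eq, hχ.inv, Units.val_mk0]

theorem IsQuadratic.sum_sum_mul_addChar [DecidableEq F] (hχ : χ.IsQuadratic) {b c : F}
    (hb : b ≠ 0) (hc : c ≠ 0) :
    ∑ u ∈ univ.filter (· ≠ 0), ∑ v ∈ univ.filter (· ≠ 0), χ v * ψ (b * u * v⁻¹ + c * u⁻¹) =
      χ b * χ c * gaussSum χ ψ ^ 2 :=
  calc _ = ∑ u ∈ univ.filter (· ≠ 0), (∑ v, χ v * ψ (b * u * v⁻¹)) * ψ (c * u⁻¹) := by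
        refine sum_congr rfl fun u _ ↦ ?_
        simp only [AddChar.map_add_eq_mul, ← mul_assoc, ← sum_mul, sum_filter_ne_zero_mul]
    _ = ∑ u ∈ univ.filter (· ≠ 0), χ b * gaussSum χ ψ * (χ u * ψ (c * u⁻¹)) := by
        refine sum_congr rfl fun u hu ↦ ?_
        rw [hχ.sum_mul_addChar_mul_inv ψ (mul_ne_zero hb (mem_filter.mp hu).2), map_mul]
        ring
    _ = _ := by
        rw [← mul_sum, sum_filter_ne_zero_mul, hχ.sum_mul_addChar_mul_inv ψ hc]
        ring

end MulChar

lemma e_intCast_div (N : ℕ) [NeZero N] (n : ℤ) : e (n / N) = ZMod.stdAddChar (n : ZMod N) := by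
  rw [ZMod.stdAddChar_coe, e]
  push_cast
  ring_nf

lemma sum_range_coprime_eq_sum_ne_zero {M : Type*} [AddCommMonoid M] (p : ℕ) [Fact p.Prime]
    (f : ZMod p → M) :
    ∑ y ∈ (range p).filter (fun y ↦ y.gcd p = 1), f y = ∑ u ∈ univ.filter (· ≠ 0), f u := by
  have coprime_iff (y : ℕ) : y.gcd p = 1 ↔ (y : ZMod p) ≠ 0 := by
    rw [← isUnit_iff_ne_zero, ZMod.isUnit_iff_coprime]
  refine sum_nbij' (↑) ZMod.val (fun y hy ↦ ?_) (fun u hu ↦ ?_) (fun y hy ↦ ?_)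
    (fun u _ ↦ ZMod.natCast_zmod_val u) fun _ _ ↦ rfl
  · simp_all
  · simp_all [ZMod.val_lt]
  · exact ZMod.val_cast_of_lt (mem_range.mp (mem_filter.mp hy).1)

noncomputable def legendreChar (p : ℕ) [Fact p.Prime] : MulChar (ZMod p) ℂ :=
  (quadraticChar (ZMod p)).ringHomComp (Int.castRingHom ℂ)

lemma legendreChar_intCast (p : ℕ) [Fact p.Prime] (a : ℤ) :
    legendreChar p a = legendreSym p a := rfl

lemma isQuadratic_legendreChar (p : ℕ) [Fact p.Prime] : (legendreChar p).IsQuadratic :=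
  (quadraticChar_isQuadratic _).comp _

lemma legendreChar_ne_one {p : ℕ} [Fact p.Prime] (hp : p ≠ 2) : legendreChar p ≠ 1 :=
  (MulChar.ringHomComp_ne_one_iff Int.cast_injective).mpr
    (quadraticChar_ne_one (by rwa [ZMod.ringChar_zmod_n]))

lemma legendreChar_neg_one {p : ℕ} [Fact p.Prime] (hp : Odd p) :
    legendreChar p (-1) = (if p % 4 = 1 then 1 else Complex.I) ^ 2 := by
  rw [← Int.cast_one, ← Int.cast_neg, legendreChar_intCast,
    legendreSym.at_neg_one (hp.ne_two_of_dvd_nat dvd_rfl)]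
  rcases Nat.odd_mod_four_iff.mp (Nat.odd_iff.mp hp) with h | h
  · simp [ZMod.χ₄_nat_one_mod_four h, h]
  · simp [ZMod.χ₄_nat_three_mod_four h, h]

lemma norm_legendreSym (p : ℕ) [Fact p.Prime] {a : ℤ} (ha : (a : ZMod p) ≠ 0) :
    ‖(legendreSym p a : ℂ)‖ = 1 := by
  rcases legendreSym.eq_one_or_neg_one p ha with h | h <;> simp [h]

lemma sum_legendreSym_mul_e_eq (p : ℕ) [Fact p.Prime] {r₀ : ℤ} (h₀ : (p : ℤ) ∣ r₀) (r₁ c : ℤ) :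
    ∑ y ∈ (range p).filter (fun y ↦ y.gcd p = 1), ∑ z ∈ (range p).filter (fun z ↦ z.gcd p = 1),
        (legendreSym p z : ℂ) *
          e (((r₀ * ((z : ZMod p)⁻¹.val : ℤ) - r₁ * y * ((z : ZMod p)⁻¹.val : ℤ)
            + c * ((y : ZMod p)⁻¹.val : ℤ) : ℤ) : ℝ) / p) =
      ∑ u ∈ univ.filter (· ≠ 0), ∑ v ∈ univ.filter (· ≠ 0),
        legendreChar p v *
          ZMod.stdAddChar (((-r₁ : ℤ) : ZMod p) * u * v⁻¹ + (c : ZMod p) * u⁻¹) := by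
  rw [← sum_range_coprime_eq_sum_ne_zero]
  refine sum_congr rfl fun y _ ↦ ?_
  rw [← sum_range_coprime_eq_sum_ne_zero]
  refine sum_congr rfl fun z _ ↦ ?_
  rw [e_intCast_div, ← legendreChar_intCast]
  push_cast [(ZMod.intCast_zmod_eq_zero_iff_dvd _ _).mpr h₀, ZMod.natCast_val, ZMod.cast_id]
  ring_nf

/-- Let `p` be an odd prime, `p ∤ r₁ r₂ m`, and `p ∣ r₀`.  Then
`∑_{y,z ∈ (ℤ/p)ˣ} (z/p) e((r₀ z̄ − r₁ y z̄ + r₂ m ȳ)/p)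
  = (r₂ m / p)(−r₁ / p) ε_p² p`, where `ε_p = 1` if `p ≡ 1 (mod 4)` and `ε_p = i`
otherwise; in particular its absolute value equals `p`. -/
theorem twisted_sum_eval (p : ℕ) [Fact p.Prime] (hp : Odd p)
    (r₀ r₁ r₂ m : ℤ) (h : ¬ (p : ℤ) ∣ r₁ * r₂ * m) (h₀ : (p : ℤ) ∣ r₀) :
    (∑ y ∈ (Finset.range p).filter (fun y => Nat.gcd y p = 1),
      ∑ z ∈ (Finset.range p).filter (fun z => Nat.gcd z p = 1),
        (legendreSym p z : ℂ) *
          e ((((r₀ * (((z : ZMod p)⁻¹).val : ℤ)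
              - r₁ * y * (((z : ZMod p)⁻¹).val : ℤ)
              + r₂ * m * (((y : ZMod p)⁻¹).val : ℤ) : ℤ)) : ℝ) / p)) =
      (legendreSym p (r₂ * m) : ℂ) * (legendreSym p (-r₁) : ℂ)
        * (if p % 4 = 1 then 1 else Complex.I) ^ 2 * p ∧
    ‖(∑ y ∈ (Finset.range p).filter (fun y => Nat.gcd y p = 1),
      ∑ z ∈ (Finset.range p).filter (fun z => Nat.gcd z p = 1),
        (legendreSym p z : ℂ) *
          e ((((r₀ * (((z : ZMod p)⁻¹).val : ℤ)
              - r₁ * y * (((z : ZMod p)⁻¹).val : ℤ)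
              + r₂ * m * (((y : ZMod p)⁻¹).val : ℤ) : ℤ)) : ℝ) / p))‖ = p := by
  have hp₂ : p ≠ 2 := hp.ne_two_of_dvd_nat dvd_rfl
  have hb : ((-r₁ : ℤ) : ZMod p) ≠ 0 := by
    rw [ne_eq, ZMod.intCast_zmod_eq_zero_iff_dvd, dvd_neg]
    exact fun hd ↦ h (by simpa [mul_assoc] using hd.mul_right (r₂ * m))
  have hc : ((r₂ * m : ℤ) : ZMod p) ≠ 0 := by
    rw [ne_eq, ZMod.intCast_zmod_eq_zero_iff_dvd]
    exact fun hd ↦ h (by simpa [mul_assoc] using hd.mul_left r₁)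
  rw [sum_legendreSym_mul_e_eq p h₀, (isQuadratic_legendreChar p).sum_sum_mul_addChar _ hb hc,
    gaussSum_sq (χ := legendreChar p) (legendreChar_ne_one hp₂) (isQuadratic_legendreChar p)
      (ZMod.isPrimitive_stdAddChar p),
    ZMod.card, legendreChar_neg_one hp, legendreChar_intCast, legendreChar_intCast]
  refine ⟨by ring, ?_⟩
  rw [norm_mul, norm_mul, norm_mul, norm_legendreSym p hb, norm_legendreSym p hc]
  split_ifs <;> simp
end

section
/- For every ε > 0 there is a constant C such that for all positive integers n, r₃(n) ≤ C n^{1/2+ε}, where r₃(n) = #{(n₁,n₂,n₃) ∈ ℤ³ : n₁² + n₂² + n₃² = n}. -/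
/-!
Slicing by the first coordinate gives `r₃(n) ≤ ∑_{|a| ≤ √n} r₂(n - a²)`, so it suffices that
`r₂(m) ≤ 4 d(m) ≪_ε m^ε`.

For `r₂`, work in `ℤ[i]`: a Gaussian prime `π` dividing the norm `z z̄` divides `z` or `z̄`, so
peeling off one factor `π` or `π̄` at a time, every `z` of norm `N(π)^e k` is `π^j π̄^(e-j) w`
with `N(w) = k`. Hence `r₂(p^e k) ≤ (e + 1) r₂(k)` for every rational prime `p`: take `π` of
norm `p` when `p ≢ 3 (mod 4)`, and `π = p` (of norm `p²`) otherwise, where an odd power of `p`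
leaves no solutions at all. Induction over the factorisation of `m` gives `r₂(m) ≤ 4 d(m)`.

For the divisor bound, `d(m) = ∏ (e + 1)` over the prime powers `p^e ∥ m`, and `e + 1 ≤ (p^e)^ε`
as soon as `p^ε ≥ 2`; the finitely many primes `p < 2^(1/ε)` only contribute a constant.
-/

/-- `r₃(n) = #{(n₁,n₂,n₃) ∈ ℤ³ : n₁² + n₂² + n₃² = n}`. -/
noncomputable def r3 (n : ℕ) : ℕ :=
  ((Finset.Icc (-(n : ℤ)) (n : ℤ) ×ˢ Finset.Icc (-(n : ℤ)) (n : ℤ) ×ˢ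
      Finset.Icc (-(n : ℤ)) (n : ℤ)).filter
    (fun t => t.1 ^ 2 + t.2.1 ^ 2 + t.2.2 ^ 2 = (n : ℤ))).card

open Finset

local notation "ℤ[i]" => GaussianInt

namespace GaussianInt

/-- `r₂(m) = #(normFiber m)`. -/
noncomputable def normFiber (m : ℕ) : Finset ℤ[i] :=
  ((Icc (-(m : ℤ)) m ×ˢ Icc (-(m : ℤ)) m).image fun t => (⟨t.1, t.2⟩ : ℤ[i])).filter
    (·.norm = m)

lemma mem_normFiber {m : ℕ} {z : ℤ[i]} : z ∈ normFiber m ↔ z.norm = m := by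
  have hbound : ∀ a b : ℤ, a * a + b * b = m → -(m : ℤ) ≤ a ∧ a ≤ m := fun a b h => by
    constructor <;> nlinarith [Int.le_self_sq a, Int.le_self_sq (-a), mul_self_nonneg b]
  rw [normFiber, mem_filter, and_iff_right_iff_imp, Zsqrtd.norm_def]
  intro h
  simp only [mem_image, mem_product, mem_Icc, Prod.exists]
  exact ⟨z.re, z.im, ⟨hbound _ _ (by linarith), hbound z.im z.re (by linarith)⟩, rfl⟩

lemma prime_of_prime_natAbs_norm {π : ℤ[i]} (hπ : π.norm.natAbs.Prime) : Prime π := by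
  refine irreducible_iff_prime.mp ⟨fun hu => ?_, fun a b hab => ?_⟩
  · exact hπ.ne_one (Zsqrtd.norm_eq_one_iff.mpr hu)
  · rw [hab, Zsqrtd.norm_mul, Int.natAbs_mul, Nat.prime_mul_iff] at hπ
    simp only [← Zsqrtd.norm_eq_one_iff]
    tauto

lemma dvd_or_star_dvd_of_dvd_norm {π z : ℤ[i]} (hπ : Prime π) (h : π ∣ (z.norm : ℤ[i])) :
    π ∣ z ∨ star π ∣ z := by
  rw [Zsqrtd.norm_eq_mul_conj] at h
  refine (hπ.dvd_or_dvd h).imp_right fun h' => ?_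
  simpa [starRingEnd_apply] using map_dvd (starRingEnd ℤ[i]) h'

lemma exists_eq_pow_mul_star_pow_mul {π : ℤ[i]} (hπ : Prime π) {k : ℤ} (e : ℕ) (z : ℤ[i])
    (hz : z.norm = π.norm ^ e * k) :
    ∃ j ≤ e, ∃ w : ℤ[i], w.norm = k ∧ z = π ^ j * star π ^ (e - j) * w := by
  have hN : π.norm ≠ 0 := by simpa [GaussianInt.norm_eq_zero] using hπ.ne_zero
  induction e generalizing z with
  | zero => exact ⟨0, le_rfl, z, by simpa using hz, by simp⟩
  | succ e ih =>
    have hdvd : π ∣ (z.norm : ℤ[i]) := by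
      have hπN : π ∣ (π.norm : ℤ[i]) := ⟨star π, Zsqrtd.norm_eq_mul_conj π⟩
      rw [hz]
      push_cast
      exact (dvd_pow hπN e.succ_ne_zero).mul_right _
    rcases dvd_or_star_dvd_of_dvd_norm hπ hdvd with ⟨z', rfl⟩ | ⟨z', rfl⟩
    · obtain ⟨j, hj, w, hw, rfl⟩ := ih z' (mul_left_cancel₀ hN (by
        rw [Zsqrtd.norm_mul] at hz; rw [hz]; ring))
      exact ⟨j + 1, by omega, w, hw, by rw [Nat.add_sub_add_right]; ring⟩
    · obtain ⟨j, hj, w, hw, rfl⟩ := ih z' (mul_left_cancel₀ hN (by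
        rw [Zsqrtd.norm_mul, Zsqrtd.norm_conj] at hz; rw [hz]; ring))
      exact ⟨j, by omega, w, hw, by rw [Nat.sub_add_comm hj]; ring⟩

lemma card_normFiber_pow_mul_le {π : ℤ[i]} (hπ : Prime π) {q : ℕ} (hq : π.norm = q)
    (e k : ℕ) : #(normFiber (q ^ e * k)) ≤ (e + 1) * #(normFiber k) :=
  calc #(normFiber (q ^ e * k))
      ≤ #((range (e + 1)).biUnion fun j => (normFiber k).image (π ^ j * star π ^ (e - j) * ·)) := by
        refine card_le_card fun z hz => ?_
        rw [mem_normFiber] at hz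
        obtain ⟨j, hj, w, hw, rfl⟩ :=
          exists_eq_pow_mul_star_pow_mul hπ e z (by rw [hz, hq]; push_cast; rfl)
        simp only [mem_biUnion, mem_range, mem_image, mem_normFiber]
        exact ⟨j, by omega, w, hw, rfl⟩
    _ ≤ ∑ j ∈ range (e + 1), #((normFiber k).image (π ^ j * star π ^ (e - j) * ·)) :=
        card_biUnion_le
    _ ≤ ∑ j ∈ range (e + 1), #(normFiber k) := sum_le_sum fun j _ => card_image_le
    _ = (e + 1) * #(normFiber k) := by rw [sum_const, card_range, smul_eq_mul]

lemma normFiber_mul_eq_empty {p c : ℕ} (hp : Prime (p : ℤ[i])) (hpc : ¬ p ∣ c) :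
    normFiber (p * c) = ∅ := by
  refine eq_empty_of_forall_notMem fun z hz => hpc ?_
  rw [mem_normFiber] at hz
  have hdvd : (p : ℤ[i]) ∣ (z.norm : ℤ[i]) := ⟨c, by rw [hz]; push_cast; rfl⟩
  obtain ⟨w, rfl⟩ : (p : ℤ[i]) ∣ z := by
    simpa using dvd_or_star_dvd_of_dvd_norm hp hdvd
  have hp0 : (p : ℤ) ≠ 0 := by exact_mod_cast hp.ne_zero
  rw [Zsqrtd.norm_mul, Zsqrtd.norm_natCast, mul_assoc, Nat.cast_mul] at hz
  exact_mod_cast Dvd.intro _ (mul_left_cancel₀ hp0 hz)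

lemma card_normFiber_prime_pow_mul_le {p c : ℕ} (hp : p.Prime) (hpc : ¬ p ∣ c) (e : ℕ) :
    #(normFiber (p ^ e * c)) ≤ (e + 1) * #(normFiber c) := by
  have := Fact.mk hp
  by_cases h3 : p % 4 = 3
  · have hpi : Prime (p : ℤ[i]) := prime_of_nat_prime_of_mod_four_eq_three p h3
    have hq : (p : ℤ[i]).norm = (p * p : ℕ) := by rw [Zsqrtd.norm_natCast, Nat.cast_mul]
    obtain ⟨f, rfl | rfl⟩ := Nat.even_or_odd' e
    · calc #(normFiber (p ^ (2 * f) * c)) = #(normFiber ((p * p) ^ f * c)) := by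
            rw [pow_mul, sq]
        _ ≤ (f + 1) * #(normFiber c) := card_normFiber_pow_mul_le hpi hq f c
        _ ≤ (2 * f + 1) * #(normFiber c) := by gcongr; omega
    · calc #(normFiber (p ^ (2 * f + 1) * c)) = #(normFiber ((p * p) ^ f * (p * c))) := by
            rw [pow_succ, pow_mul, sq, mul_assoc]
        _ ≤ (f + 1) * #(normFiber (p * c)) := card_normFiber_pow_mul_le hpi hq f _
        _ = 0 := by rw [normFiber_mul_eq_empty hpi hpc, card_empty, mul_zero]
        _ ≤ _ := Nat.zero_le _
  · obtain ⟨a, b, hab⟩ := Nat.Prime.sq_add_sq h3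
    have hq : (⟨a, b⟩ : ℤ[i]).norm = p := by
      rw [Zsqrtd.norm_def, ← hab]; push_cast; ring
    have hπ : Prime (⟨a, b⟩ : ℤ[i]) :=
      prime_of_prime_natAbs_norm (by rwa [hq, Int.natAbs_natCast])
    exact card_normFiber_pow_mul_le hπ hq e c

lemma card_normFiber_le_four_mul_card_divisors {m : ℕ} (hm : m ≠ 0) :
    #(normFiber m) ≤ 4 * #m.divisors := by
  induction m using Nat.recOnPrimePow with
  | zero => exact absurd rfl hm
  | one => decide
  | prime_pow_mul a p n hp hpa hn ih =>
    have hcop : (p ^ n).Coprime a :=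
      (Nat.coprime_pow_left_iff hn _ _).2 (hp.coprime_iff_not_dvd.2 hpa)
    calc #(normFiber (p ^ n * a)) ≤ (n + 1) * #(normFiber a) :=
          card_normFiber_prime_pow_mul_le hp hpa n
      _ ≤ (n + 1) * (4 * #a.divisors) := by gcongr; exact ih (right_ne_zero_of_mul hm)
      _ = 4 * #(p ^ n * a).divisors := by
          rw [hcop.card_divisors_mul, Nat.divisors_prime_pow hp, card_map, card_range]; ring

end GaussianInt

open Real

lemma Real.add_one_le_mul_exp {δ x : ℝ} (hδ : 0 < δ) (hx : 0 ≤ x) :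
    x + 1 ≤ (1 + 1 / δ) * exp (δ * x) := by
  have h1 : (δ * x + 1) / δ ≤ exp (δ * x) / δ :=
    div_le_div_of_nonneg_right (add_one_le_exp _) hδ.le
  rw [add_div, mul_div_cancel_left₀ _ hδ.ne'] at h1
  have h2 : 1 ≤ exp (δ * x) := one_le_exp (by positivity)
  have h3 : (1 + 1 / δ) * exp (δ * x) = exp (δ * x) + exp (δ * x) / δ := by ring
  linarith [one_div_pos.mpr hδ]

lemma add_one_le_mul_pow_rpow {ε p : ℝ} (hε : 0 < ε) (hp : 2 ≤ p) (e : ℕ) :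
    (e + 1 : ℝ) ≤ (1 + 1 / (ε * log 2)) * (p ^ e) ^ ε :=
  calc (e + 1 : ℝ) ≤ (1 + 1 / (ε * log 2)) * exp (ε * log 2 * e) :=
        add_one_le_mul_exp (mul_pos hε (log_pos one_lt_two)) e.cast_nonneg
    _ = (1 + 1 / (ε * log 2)) * ((2 : ℝ) ^ e) ^ ε := by
        rw [rpow_def_of_pos (by positivity), log_pow]; ring_nf
    _ ≤ (1 + 1 / (ε * log 2)) * (p ^ e) ^ ε := by gcongr

lemma add_one_le_pow_rpow {ε p : ℝ} (hp : 0 ≤ p) (hpε : 2 ≤ p ^ ε) (e : ℕ) :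
    (e + 1 : ℝ) ≤ (p ^ e) ^ ε :=
  calc (e + 1 : ℝ) ≤ (1 + 1) ^ e := by
        simpa [add_comm] using one_add_mul_le_pow (a := (1 : ℝ)) (by norm_num) e
    _ ≤ (p ^ ε) ^ e := by gcongr; linarith
    _ = (p ^ e) ^ ε := rpow_pow_comm hp ε e

theorem Nat.card_divisors_le_mul_rpow {ε : ℝ} (hε : 0 < ε) :
    ∃ C : ℝ, 1 ≤ C ∧ ∀ m : ℕ, m ≠ 0 → (#m.divisors : ℝ) ≤ C * m ^ ε := by
  set A := 1 + 1 / (ε * Real.log 2)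
  have hA : 1 ≤ A := le_add_of_nonneg_right (by have := Real.log_pos one_lt_two; positivity)
  set T : ℝ := 2 ^ (1 / ε)
  refine ⟨A ^ ⌈T⌉₊, one_le_pow₀ hA, fun m hm => ?_⟩
  have hfactor : ∀ p ∈ m.primeFactors, (m.factorization p + 1 : ℝ) ≤
      (if (p : ℝ) < T then A else 1) * ((p : ℝ) ^ m.factorization p) ^ ε := by
    intro p hp
    have hp2 : (2 : ℝ) ≤ p := by exact_mod_cast (Nat.prime_of_mem_primeFactors hp).two_le
    split_ifs with hpT
    · exact add_one_le_mul_pow_rpow hε hp2 _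
    · rw [one_mul]
      refine add_one_le_pow_rpow (by positivity) ?_ _
      calc (2 : ℝ) = T ^ ε := by rw [← rpow_mul zero_le_two, one_div_mul_cancel hε.ne', rpow_one]
        _ ≤ (p : ℝ) ^ ε := by gcongr; exact not_lt.mp hpT
  have hsmall : ∏ p ∈ m.primeFactors, (if (p : ℝ) < T then A else 1) ≤ A ^ ⌈T⌉₊ := by
    rw [← prod_filter, prod_const]
    refine pow_le_pow_right₀ hA ((card_le_card fun p hp => ?_).trans (card_range _).le)
    exact mem_range.mpr (Nat.lt_ceil.mpr (mem_filter.mp hp).2)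
  have hprod : ∏ p ∈ m.primeFactors, ((p : ℝ) ^ m.factorization p) ^ ε = (m : ℝ) ^ ε := by
    rw [finsetProd_rpow _ _ (fun p _ => by positivity)]
    exact_mod_cast congrArg (fun x : ℕ => (x : ℝ) ^ ε)
      (Nat.prod_primeFactors_pow_factorization hm).symm
  calc (#m.divisors : ℝ) = ∏ p ∈ m.primeFactors, (m.factorization p + 1 : ℝ) := by
        rw [Nat.card_divisors hm]; push_cast; rfl
    _ ≤ ∏ p ∈ m.primeFactors,
          (if (p : ℝ) < T then A else 1) * ((p : ℝ) ^ m.factorization p) ^ ε :=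
        prod_le_prod (fun _ _ => by positivity) hfactor
    _ ≤ A ^ ⌈T⌉₊ * (m : ℝ) ^ ε := by
        rw [prod_mul_distrib, hprod]; gcongr

open GaussianInt

lemma card_normFiber_le_mul_rpow {ε C : ℝ} (hε : 0 ≤ ε) (hC : 1 ≤ C)
    (hdiv : ∀ m : ℕ, m ≠ 0 → (#m.divisors : ℝ) ≤ C * m ^ ε) {m n : ℕ} (hmn : m ≤ n)
    (hn : 0 < n) : (#(normFiber m) : ℝ) ≤ 4 * C * n ^ ε := by
  have hnε : 1 ≤ (n : ℝ) ^ ε := one_le_rpow (by exact_mod_cast hn) hε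
  rcases eq_or_ne m 0 with rfl | hm
  · have h0 : #(normFiber 0) = 1 := by decide
    rw [h0, Nat.cast_one]
    nlinarith
  · calc (#(normFiber m) : ℝ) ≤ 4 * #m.divisors := by
          exact_mod_cast card_normFiber_le_four_mul_card_divisors hm
      _ ≤ 4 * (C * m ^ ε) := by gcongr; exact hdiv m hm
      _ ≤ 4 * C * n ^ ε := by rw [← mul_assoc]; gcongr

lemma r3_le_sum_card_normFiber (n : ℕ) :
    r3 n ≤ ∑ a ∈ Icc (-(n.sqrt : ℤ)) n.sqrt, #(normFiber (n - a ^ 2).toNat) := by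
  rw [r3, ← card_sigma]
  refine card_le_card_of_injOn (fun t => ⟨t.1, ⟨t.2.1, t.2.2⟩⟩) (fun t ht => ?_) ?_
  · simp only [coe_filter, Set.mem_ofPred_eq, mem_product] at ht
    have hsq : t.1 ^ 2 ≤ n := by nlinarith [ht.2, sq_nonneg t.2.1, sq_nonneg t.2.2]
    have habs : t.1.natAbs ≤ n.sqrt := Nat.le_sqrt'.mpr (by zify; rwa [sq_abs])
    simp only [coe_sigma, Set.mem_sigma_iff, coe_Icc, Set.mem_Icc, mem_coe, mem_normFiber,
      Zsqrtd.norm_def]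
    refine ⟨by omega, ?_⟩
    rw [Int.toNat_of_nonneg (by linarith)]
    linarith [ht.2]
  · rintro ⟨a, b, c⟩ - ⟨a', b', c'⟩ - h
    simp only [Sigma.mk.injEq, heq_eq_eq, Zsqrtd.mk.injEq] at h
    obtain ⟨rfl, rfl, rfl⟩ := h
    rfl

lemma two_mul_sqrt_add_one_le_three_mul_rpow {n : ℕ} (hn : 0 < n) :
    (2 * n.sqrt + 1 : ℝ) ≤ 3 * (n : ℝ) ^ (1 / 2 : ℝ) := by
  have h1 : (1 : ℝ) ≤ √n := one_le_sqrt.mpr (by exact_mod_cast hn)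
  rw [← sqrt_eq_rpow]
  linarith [nat_sqrt_le_real_sqrt (a := n)]

/-- `r₃(n) ≪_ε n^{1/2+ε}`. -/
theorem r3_bound : ∀ ε : ℝ, 0 < ε → ∃ C : ℝ, 0 < C ∧
    ∀ n : ℕ, 0 < n → (r3 n : ℝ) ≤ C * (n : ℝ) ^ ((1 : ℝ) / 2 + ε) := by
  intro ε hε
  obtain ⟨C, hC, hdiv⟩ := Nat.card_divisors_le_mul_rpow hε
  refine ⟨12 * C, by linarith, fun n hn => ?_⟩
  set s := n.sqrt
  calc (r3 n : ℝ) ≤ ∑ a ∈ Icc (-(s : ℤ)) s, (#(normFiber (n - a ^ 2).toNat) : ℝ) := by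
        exact_mod_cast r3_le_sum_card_normFiber n
    _ ≤ ∑ a ∈ Icc (-(s : ℤ)) s, 4 * C * (n : ℝ) ^ ε :=
        sum_le_sum fun a _ => card_normFiber_le_mul_rpow hε.le hC hdiv (by have := sq_nonneg a; omega) hn
    _ = (2 * s + 1) * (4 * C * (n : ℝ) ^ ε) := by
        rw [sum_const, Int.card_Icc, nsmul_eq_mul]
        congr 1
        rw [show (s + 1 - -s : ℤ).toNat = 2 * s + 1 by omega]
        push_cast; ring
    _ ≤ 3 * (n : ℝ) ^ (1 / 2 : ℝ) * (4 * C * (n : ℝ) ^ ε) := by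
        gcongr; exact two_mul_sqrt_add_one_le_three_mul_rpow hn
    _ = 12 * C * (n : ℝ) ^ ((1 : ℝ) / 2 + ε) := by
        rw [rpow_add (by exact_mod_cast hn)]; ring
end

section
/- Let q = q' q₃ with gcd(q', q₃) = 1, and let n | q'. Then for any integers b₁, b₂, b₃, m, v, the character sum C(b₁,b₂,b₃,n,m,v;q) = ∑*_{a mod q} e(−āv/q) G(a,b₁;q)G(a,b₂;q)G(a,b₃;q) S(−ā, m; q/n) factors as a product C* · C**, where C* = ∑*_{a₁ mod q'} e(−ā₁v/q') G(a₁,b₁;q')G(a₁,b₂;q')G(a₁,b₃;q') S(−ā₁ q₃, m q̄₃²; q'/n) and C** = ∑*_{a₂ mod q₃} e(−ā₂v/q₃) G(a₂,b₁;q₃)G(a₂,b₂;q₃)G(a₂,b₃;q₃) S(−ā₂ q', m (q'/n)‾²; q₃). -/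
/-- The quadratic Gauss sum `G(a,b;q)`. -/
noncomputable def gaussG (a b : ℤ) (q : ℕ) : ℂ :=
  ∑ d ∈ Finset.range q, e (((a * d ^ 2 + b * d : ℤ) : ℝ) / q)

/-- The Kloosterman sum `S(a,b;q)`. -/
noncomputable def kloosterman (a b : ℤ) (q : ℕ) : ℂ :=
  ∑ x ∈ (Finset.range q).filter (fun x => Nat.gcd x q = 1),
    e (((a * x + b * (((x : ZMod q)⁻¹).val : ℤ) : ℤ) : ℝ) / q)

/-- The character sum `C(b₁,b₂,b₃,n,m,v;q)`. -/
noncomputable def charSum (b₁ b₂ b₃ : ℤ) (n : ℕ) (m v : ℤ) (q : ℕ) : ℂ :=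
  ∑ a ∈ (Finset.range q).filter (fun a => Nat.gcd a q = 1),
    e (-((((((a : ZMod q)⁻¹).val : ℤ) * v : ℤ) : ℝ) / q))
      * gaussG a b₁ q * gaussG a b₂ q * gaussG a b₃ q
      * kloosterman (-(((a : ZMod q)⁻¹).val : ℤ)) m (q / n)

lemma e_add (x y : ℝ) : e (x + y) = e x * e y := by
  simp [e, mul_add, Complex.exp_add]

lemma e_int (n : ℤ) : e n = 1 := by
  simp only [e]
  have : 2 * (Real.pi:ℂ) * Complex.I * (n:ℝ) = n * (2 * Real.pi * Complex.I) := by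
    push_cast; ring
  rw [this, Complex.exp_int_mul_two_pi_mul_I]

lemma e_dvd_congr (q : ℕ) (hq : q ≠ 0) (x y : ℤ) (h : (q:ℤ) ∣ x - y) :
    e ((x:ℝ)/q) = e ((y:ℝ)/q) := by
  obtain ⟨k, hk⟩ := h
  have hx : x = y + q * k := by linarith
  have hq' : (q:ℝ) ≠ 0 := Nat.cast_ne_zero.mpr hq
  have : (x:ℝ)/q = (y:ℝ)/q + (k:ℝ) := by
    rw [hx]; push_cast; field_simp
  rw [this, e_add, e_int, mul_one]

lemma e_split (u w : ℕ) (hu : u ≠ 0) (hw : w ≠ 0) (hco : Nat.Coprime u w)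
    (N A B : ℤ) (hA : (N : ZMod u) = (A * w : ℤ)) (hB : (N : ZMod w) = (B * u : ℤ)) :
    e ((N:ℝ)/(u*w : ℕ)) = e ((A:ℝ)/u) * e ((B:ℝ)/w) := by
  have h1 : (u:ℤ) ∣ N - (A*w + B*u) := by
    have : ((N - (A*w + B*u) : ℤ) : ZMod u) = 0 := by
      push_cast at hA ⊢
      rw [hA]; simp only [ZMod.natCast_self]; ring
    exact (ZMod.intCast_zmod_eq_zero_iff_dvd _ _).mp this
  have h2 : (w:ℤ) ∣ N - (A*w + B*u) := by
    have : ((N - (A*w + B*u) : ℤ) : ZMod w) = 0 := by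
      push_cast at hB ⊢
      rw [hB]; simp only [ZMod.natCast_self]; ring
    exact (ZMod.intCast_zmod_eq_zero_iff_dvd _ _).mp this
  have hdvd : ((u*w : ℕ):ℤ) ∣ N - (A*w + B*u) := by
    push_cast
    exact (Nat.isCoprime_iff_coprime.mpr hco).mul_dvd h1 h2
  have huw : (u*w : ℕ) ≠ 0 := Nat.mul_ne_zero hu hw
  rw [e_dvd_congr (u*w) huw N (A*w + B*u) hdvd]
  have hu' : (u:ℝ) ≠ 0 := Nat.cast_ne_zero.mpr hu
  have hw' : (w:ℝ) ≠ 0 := Nat.cast_ne_zero.mpr hw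
  have : ((A*w + B*u : ℤ):ℝ)/((u*w:ℕ):ℝ) = (A:ℝ)/u + (B:ℝ)/w := by
    push_cast; field_simp; try ring
  rw [this, e_add]

lemma mul_val_inv_cast {q u : ℕ} [NeZero q] (h : u ∣ q) (x : ℕ) (hx : Nat.Coprime x q) :
    (x : ZMod u) * ((((x : ZMod q)⁻¹).val : ZMod u)) = 1 := by
  have h1 : (x : ZMod q) * (x : ZMod q)⁻¹ = 1 := ZMod.coe_mul_inv_eq_one x hx
  have h2 := congrArg (ZMod.castHom h (ZMod u)) h1
  rw [map_mul, map_one, map_natCast] at h2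
  have h3 : ((((x : ZMod q)⁻¹).val : ZMod u)) = (ZMod.castHom h (ZMod u)) ((x : ZMod q)⁻¹) := by
    rw [ZMod.castHom_apply, ZMod.natCast_val]
  rw [h3]; exact h2

lemma coprime_mod (s n : ℕ) (h : Nat.Coprime s n) : Nat.Coprime (s % n) n := by
  unfold Nat.Coprime at *
  rw [← Nat.gcd_rec, Nat.gcd_comm]
  exact h

lemma filter_card (q : ℕ) :
    ((Finset.range q).filter (fun a => Nat.gcd a q = 1)).card = q.totient := by
  rw [Nat.totient_eq_card_coprime]
  congr 1
  apply Finset.filter_congr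
  intro x _
  simp [Nat.Coprime, Nat.gcd_comm]

lemma crt_mem (u w : ℕ) (hu : u ≠ 0) (hw : w ≠ 0) (hco : u.Coprime w)
    {x₁ x₂ : ℕ} (h₁ : Nat.Coprime x₁ u) (h₂ : Nat.Coprime x₂ w) :
    (x₁ * w + x₂ * u) % (u * w) ∈
      (Finset.range (u*w)).filter (fun x => Nat.gcd x (u*w) = 1) := by
  have huw : 0 < u * w := Nat.pos_of_ne_zero (Nat.mul_ne_zero hu hw)
  refine Finset.mem_filter.mpr ⟨Finset.mem_range.mpr (Nat.mod_lt _ huw), ?_⟩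
  have hcu : Nat.Coprime (x₁ * w + x₂ * u) u :=
    (Nat.coprime_add_mul_right_left _ _ _).mpr (h₁.mul hco.symm)
  have hcw : Nat.Coprime (x₁ * w + x₂ * u) w := by
    rw [add_comm]
    exact (Nat.coprime_add_mul_right_left _ _ _).mpr (h₂.mul hco)
  exact coprime_mod _ _ (hcu.mul_right hcw)

lemma crt_inj (u w : ℕ) (hu : u ≠ 0) (hw : w ≠ 0) (hco : u.Coprime w)
    {x₁ x₂ y₁ y₂ : ℕ} (hx₁ : x₁ < u) (hx₂ : x₂ < w) (hy₁ : y₁ < u) (hy₂ : y₂ < w)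
    (h : (x₁ * w + x₂ * u) % (u * w) = (y₁ * w + y₂ * u) % (u * w)) :
    x₁ = y₁ ∧ x₂ = y₂ := by
  have hm : (x₁ * w + x₂ * u) ≡ (y₁ * w + y₂ * u) [MOD u * w] := h
  have hmu : x₁ * w ≡ y₁ * w [MOD u] := by
    have h2 : (x₁ * w + x₂ * u) ≡ (y₁ * w + y₂ * u) [MOD u] := hm.of_dvd (dvd_mul_right u w)
    unfold Nat.ModEq at h2 ⊢
    rwa [Nat.add_mul_mod_self_right, Nat.add_mul_mod_self_right] at h2
  have hmw : x₂ * u ≡ y₂ * u [MOD w] := by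
    have h2 : (x₂ * u + x₁ * w) ≡ (y₂ * u + y₁ * w) [MOD w] := by
      rw [add_comm (x₂*u), add_comm (y₂*u)]
      exact hm.of_dvd (dvd_mul_left w u)
    unfold Nat.ModEq at h2 ⊢
    rwa [Nat.add_mul_mod_self_right, Nat.add_mul_mod_self_right] at h2
  have e1 : x₁ ≡ y₁ [MOD u] := hmu.cancel_right_of_coprime (by rwa [Nat.Coprime] at hco)
  have e2 : x₂ ≡ y₂ [MOD w] := hmw.cancel_right_of_coprime (by rw [Nat.gcd_comm]; exact hco)
  exact ⟨(Nat.ModEq.eq_of_lt_of_lt e1 hx₁ hy₁), (Nat.ModEq.eq_of_lt_of_lt e2 hx₂ hy₂)⟩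

lemma crt_cast_left (u w x₁ x₂ : ℕ) :
    (((x₁ * w + x₂ * u) % (u * w) : ℕ) : ZMod u) = (x₁ : ZMod u) * w := by
  have h4 : (x₁*w + x₂*u) ≡ x₁*w [MOD u] := by
    unfold Nat.ModEq; rw [Nat.add_mul_mod_self_right]
  have h1 : (x₁ * w + x₂ * u) % (u * w) ≡ x₁ * w [MOD u] :=
    ((Nat.mod_modEq _ _).of_dvd (dvd_mul_right u w)).trans h4
  have := (ZMod.natCast_eq_natCast_iff _ _ _).mpr h1
  rw [this]; push_cast; ring

lemma crt_cast_right (u w x₁ x₂ : ℕ) :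
    (((x₁ * w + x₂ * u) % (u * w) : ℕ) : ZMod w) = (x₂ : ZMod w) * u := by
  have h4 : (x₁*w + x₂*u) ≡ x₂*u [MOD w] := by
    unfold Nat.ModEq; rw [add_comm, Nat.add_mul_mod_self_right]
  have h1 : (x₁ * w + x₂ * u) % (u * w) ≡ x₂ * u [MOD w] :=
    ((Nat.mod_modEq _ _).of_dvd (dvd_mul_left w u)).trans h4
  have := (ZMod.natCast_eq_natCast_iff _ _ _).mpr h1
  rw [this]; push_cast; ring
lemma sum_crt_full (u w : ℕ) (hu : u ≠ 0) (hw : w ≠ 0) (hco : u.Coprime w) (f : ℕ → ℂ) :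
    ∑ p ∈ Finset.range u ×ˢ Finset.range w, f ((p.1 * w + p.2 * u) % (u * w))
      = ∑ x ∈ Finset.range (u * w), f x := by
  have huw : 0 < u * w := Nat.pos_of_ne_zero (Nat.mul_ne_zero hu hw)
  apply Finset.sum_bij (fun p _ => (p.1 * w + p.2 * u) % (u * w))
  · intro p _
    exact Finset.mem_range.mpr (Nat.mod_lt _ huw)
  · intro p hp q hq h
    obtain ⟨hp1, hp2⟩ := Finset.mem_product.mp hp
    obtain ⟨hq1, hq2⟩ := Finset.mem_product.mp hq
    obtain ⟨e1, e2⟩ := crt_inj u w hu hw hco (Finset.mem_range.mp hp1)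
      (Finset.mem_range.mp hp2) (Finset.mem_range.mp hq1) (Finset.mem_range.mp hq2) h
    exact Prod.ext e1 e2
  · intro b hb
    have hcard : (Finset.range (u*w)).card ≤ (Finset.range u ×ˢ Finset.range w).card := by
      rw [Finset.card_product, Finset.card_range, Finset.card_range, Finset.card_range]
    obtain ⟨a, ha, hab⟩ := Finset.surj_on_of_inj_on_of_card_le
      (fun p _ => (p.1 * w + p.2 * u) % (u * w))
      (fun p _ => Finset.mem_range.mpr (Nat.mod_lt _ huw))
      (fun p q hp hq h => by
        obtain ⟨hp1, hp2⟩ := Finset.mem_product.mp hp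
        obtain ⟨hq1, hq2⟩ := Finset.mem_product.mp hq
        obtain ⟨e1, e2⟩ := crt_inj u w hu hw hco (Finset.mem_range.mp hp1)
          (Finset.mem_range.mp hp2) (Finset.mem_range.mp hq1) (Finset.mem_range.mp hq2) h
        exact Prod.ext e1 e2) hcard b hb
    exact ⟨a, ha, hab.symm⟩
  · intro p _
    rfl

lemma sum_crt_cop (u w : ℕ) (hu : u ≠ 0) (hw : w ≠ 0) (hco : u.Coprime w) (f : ℕ → ℂ) :
    ∑ p ∈ ((Finset.range u).filter (fun x => Nat.gcd x u = 1)) ×ˢ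
        ((Finset.range w).filter (fun x => Nat.gcd x w = 1)),
        f ((p.1 * w + p.2 * u) % (u * w))
      = ∑ x ∈ (Finset.range (u*w)).filter (fun x => Nat.gcd x (u*w) = 1), f x := by
  have hmem : ∀ p ∈ ((Finset.range u).filter (fun x => Nat.gcd x u = 1)) ×ˢ
      ((Finset.range w).filter (fun x => Nat.gcd x w = 1)),
      (p.1 * w + p.2 * u) % (u * w) ∈
        (Finset.range (u*w)).filter (fun x => Nat.gcd x (u*w) = 1) := by
    intro p hp
    obtain ⟨hp1, hp2⟩ := Finset.mem_product.mp hp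
    exact crt_mem u w hu hw hco (Finset.mem_filter.mp hp1).2 (Finset.mem_filter.mp hp2).2
  have hinj : ∀ p ∈ ((Finset.range u).filter (fun x => Nat.gcd x u = 1)) ×ˢ
      ((Finset.range w).filter (fun x => Nat.gcd x w = 1)),
      ∀ q ∈ ((Finset.range u).filter (fun x => Nat.gcd x u = 1)) ×ˢ
      ((Finset.range w).filter (fun x => Nat.gcd x w = 1)),
      (p.1 * w + p.2 * u) % (u * w) = (q.1 * w + q.2 * u) % (u * w) → p = q := by
    intro p hp q hq h
    obtain ⟨hp1, hp2⟩ := Finset.mem_product.mp hp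
    obtain ⟨hq1, hq2⟩ := Finset.mem_product.mp hq
    obtain ⟨e1, e2⟩ := crt_inj u w hu hw hco
      (Finset.mem_range.mp (Finset.mem_filter.mp hp1).1)
      (Finset.mem_range.mp (Finset.mem_filter.mp hp2).1)
      (Finset.mem_range.mp (Finset.mem_filter.mp hq1).1)
      (Finset.mem_range.mp (Finset.mem_filter.mp hq2).1) h
    exact Prod.ext e1 e2
  apply Finset.sum_bij (fun p _ => (p.1 * w + p.2 * u) % (u * w)) hmem
    (fun p hp q hq h => hinj p hp q hq h)
  · intro b hb
    have hcard : ((Finset.range (u*w)).filter (fun x => Nat.gcd x (u*w) = 1)).card ≤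
        (((Finset.range u).filter (fun x => Nat.gcd x u = 1)) ×ˢ
          ((Finset.range w).filter (fun x => Nat.gcd x w = 1))).card := by
      rw [Finset.card_product, filter_card, filter_card, filter_card, Nat.totient_mul hco]
    obtain ⟨a, ha, hab⟩ := Finset.surj_on_of_inj_on_of_card_le
      (fun p _ => (p.1 * w + p.2 * u) % (u * w)) hmem
      (fun p q hp hq h => hinj p hp q hq h) hcard b hb
    exact ⟨a, ha, hab.symm⟩
  · intro p _
    rfl

lemma gauss_split (u w : ℕ) (hu : u ≠ 0) (hw : w ≠ 0) (hco : u.Coprime w)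
    (aa b A₁ A₂ : ℤ) (h₁ : ((A₁ : ZMod u)) = ((aa * w : ℤ) : ZMod u))
    (h₂ : ((A₂ : ZMod w)) = ((aa * u : ℤ) : ZMod w)) :
    gaussG aa b (u * w) = gaussG A₁ b u * gaussG A₂ b w := by
  unfold gaussG
  rw [Finset.sum_mul_sum, ← Finset.sum_product', ← sum_crt_full u w hu hw hco]
  apply Finset.sum_congr rfl
  intro p _
  set x := (p.1 * w + p.2 * u) % (u * w) with hxdef
  have hA : ((aa * (x:ℕ) ^ 2 + b * (x:ℕ) : ℤ) : ZMod u)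
      = (((A₁ * p.1 ^ 2 + b * p.1 : ℤ)) * (w:ℤ) : ℤ) := by
    push_cast at h₁ ⊢
    rw [crt_cast_left]
    rw [h₁]
    ring
  have hB : ((aa * (x:ℕ) ^ 2 + b * (x:ℕ) : ℤ) : ZMod w)
      = (((A₂ * p.2 ^ 2 + b * p.2 : ℤ)) * (u:ℤ) : ℤ) := by
    push_cast at h₂ ⊢
    rw [crt_cast_right]
    rw [h₂]
    ring
  exact e_split u w hu hw hco _ _ _ hA hB

lemma klo_split (u w : ℕ) (hu : u ≠ 0) (hw : w ≠ 0) (hco : u.Coprime w)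
    (α β α₁ α₂ : ℤ) (h₁ : ((α₁ : ZMod u)) = (α : ZMod u)) (h₂ : ((α₂ : ZMod w)) = (α : ZMod w)) :
    kloosterman α β (u*w) = kloosterman α₁ (β * ((((w : ZMod u)⁻¹).val : ℤ))^2) u *
      kloosterman α₂ (β * ((((u : ZMod w)⁻¹).val : ℤ))^2) w := by
  haveI : NeZero u := ⟨hu⟩
  haveI : NeZero w := ⟨hw⟩
  haveI : NeZero (u*w) := ⟨Nat.mul_ne_zero hu hw⟩
  unfold kloosterman
  rw [Finset.sum_mul_sum, ← Finset.sum_product', ← sum_crt_cop u w hu hw hco]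
  apply Finset.sum_congr rfl
  intro p hp
  obtain ⟨hp1, hp2⟩ := Finset.mem_product.mp hp
  have hc1 : Nat.Coprime p.1 u := (Finset.mem_filter.mp hp1).2
  have hc2 : Nat.Coprime p.2 w := (Finset.mem_filter.mp hp2).2
  set x := (p.1 * w + p.2 * u) % (u * w) with hxdef
  have hxmem := crt_mem u w hu hw hco hc1 hc2
  have hxcop : Nat.Coprime x (u*w) := (Finset.mem_filter.mp hxmem).2
  -- abbreviations for inverse vals, as ZMod u / ZMod w elements
  -- products equal one
  have hXu : (x : ZMod u) * ((((x : ZMod (u*w))⁻¹).val : ZMod u)) = 1 :=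
    mul_val_inv_cast (dvd_mul_right u w) x hxcop
  have hXw : (x : ZMod w) * ((((x : ZMod (u*w))⁻¹).val : ZMod w)) = 1 :=
    mul_val_inv_cast (dvd_mul_left w u) x hxcop
  have hP1 : (p.1 : ZMod u) * ((((p.1 : ZMod u)⁻¹).val : ZMod u)) = 1 :=
    mul_val_inv_cast dvd_rfl p.1 hc1
  have hP2 : (p.2 : ZMod w) * ((((p.2 : ZMod w)⁻¹).val : ZMod w)) = 1 :=
    mul_val_inv_cast dvd_rfl p.2 hc2
  have hW : (w : ZMod u) * ((((w : ZMod u)⁻¹).val : ZMod u)) = 1 :=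
    mul_val_inv_cast dvd_rfl w hco.symm
  have hU : (u : ZMod w) * ((((u : ZMod w)⁻¹).val : ZMod w)) = 1 :=
    mul_val_inv_cast dvd_rfl u hco
  have hXu' : ((x:ℕ) : ZMod u) = (p.1 : ZMod u) * w := crt_cast_left u w p.1 p.2
  have hXw' : ((x:ℕ) : ZMod w) = (p.2 : ZMod w) * u := crt_cast_right u w p.1 p.2
  -- key inverse decompositions
  have hinvu : ((((x : ZMod (u*w))⁻¹).val : ZMod u))
      = ((((w : ZMod u)⁻¹).val : ZMod u)) * ((((w : ZMod u)⁻¹).val : ZMod u))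
        * ((((p.1 : ZMod u)⁻¹).val : ZMod u)) * w := by
    have hunit : IsUnit ((p.1 : ZMod u) * (w : ZMod u)) :=
      ((ZMod.isUnit_iff_coprime p.1 u).mpr hc1).mul ((ZMod.isUnit_iff_coprime w u).mpr hco.symm)
    apply hunit.mul_left_cancel
    rw [← hXu', hXu, hXu']
    calc (1 : ZMod u)
        = ((p.1 : ZMod u) * ((((p.1 : ZMod u)⁻¹).val : ZMod u)))
            * (((w : ZMod u) * ((((w : ZMod u)⁻¹).val : ZMod u)))
              * ((w : ZMod u) * ((((w : ZMod u)⁻¹).val : ZMod u)))) := by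
          rw [hP1, hW]; ring
      _ = (p.1 : ZMod u) * (w : ZMod u)
            * (((((w : ZMod u)⁻¹).val : ZMod u)) * ((((w : ZMod u)⁻¹).val : ZMod u))
              * ((((p.1 : ZMod u)⁻¹).val : ZMod u)) * w) := by ring
  have hinvw : ((((x : ZMod (u*w))⁻¹).val : ZMod w))
      = ((((u : ZMod w)⁻¹).val : ZMod w)) * ((((u : ZMod w)⁻¹).val : ZMod w))
        * ((((p.2 : ZMod w)⁻¹).val : ZMod w)) * u := by
    have hunit : IsUnit ((p.2 : ZMod w) * (u : ZMod w)) :=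
      ((ZMod.isUnit_iff_coprime p.2 w).mpr hc2).mul ((ZMod.isUnit_iff_coprime u w).mpr hco)
    apply hunit.mul_left_cancel
    rw [← hXw', hXw, hXw']
    calc (1 : ZMod w)
        = ((p.2 : ZMod w) * ((((p.2 : ZMod w)⁻¹).val : ZMod w)))
            * (((u : ZMod w) * ((((u : ZMod w)⁻¹).val : ZMod w)))
              * ((u : ZMod w) * ((((u : ZMod w)⁻¹).val : ZMod w)))) := by
          rw [hP2, hU]; ring
      _ = (p.2 : ZMod w) * (u : ZMod w)
            * (((((u : ZMod w)⁻¹).val : ZMod w)) * ((((u : ZMod w)⁻¹).val : ZMod w))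
              * ((((p.2 : ZMod w)⁻¹).val : ZMod w)) * u) := by ring
  -- now the congruences for e_split
  have hA : ((α * (x:ℕ) + β * ((((x : ZMod (u*w))⁻¹).val : ℕ) : ℤ) : ℤ) : ZMod u)
      = (((α₁ * p.1 + (β * ((((w : ZMod u)⁻¹).val : ℕ) : ℤ)^2) * ((((p.1 : ZMod u)⁻¹).val : ℕ) : ℤ) : ℤ)) * (w:ℤ) : ℤ) := by
    push_cast at h₁ ⊢
    rw [hXu', hinvu, h₁]
    ring
  have hB : ((α * (x:ℕ) + β * ((((x : ZMod (u*w))⁻¹).val : ℕ) : ℤ) : ℤ) : ZMod w)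
      = (((α₂ * p.2 + (β * ((((u : ZMod w)⁻¹).val : ℕ) : ℤ)^2) * ((((p.2 : ZMod w)⁻¹).val : ℕ) : ℤ) : ℤ)) * (u:ℤ) : ℤ) := by
    push_cast at h₂ ⊢
    rw [hXw', hinvw, h₂]
    ring
  exact e_split u w hu hw hco _ _ _ hA hB

/-- Twisted multiplicativity: for `q = q' q₃` with `(q', q₃) = 1` and `n ∣ q'`,
the character sum factors as `C = C* ⋅ C**`. -/
theorem charSum_factorization (q' q₃ n : ℕ) (hq' : 1 ≤ q') (hq₃ : 1 ≤ q₃)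
    (hco : Nat.Coprime q' q₃) (hn : n ∣ q') (b₁ b₂ b₃ : ℤ) (m v : ℤ) :
    charSum b₁ b₂ b₃ n m v (q' * q₃) =
      (∑ a₁ ∈ (Finset.range q').filter (fun a => Nat.gcd a q' = 1),
        e (-((((((a₁ : ZMod q')⁻¹).val : ℤ) * v : ℤ) : ℝ) / q'))
          * gaussG a₁ b₁ q' * gaussG a₁ b₂ q' * gaussG a₁ b₃ q'
          * kloosterman (-(((a₁ : ZMod q')⁻¹).val : ℤ) * q₃)
              (m * ((((q₃ : ZMod (q' / n))⁻¹).val : ℤ)) ^ 2) (q' / n)) *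
      (∑ a₂ ∈ (Finset.range q₃).filter (fun a => Nat.gcd a q₃ = 1),
        e (-((((((a₂ : ZMod q₃)⁻¹).val : ℤ) * v : ℤ) : ℝ) / q₃))
          * gaussG a₂ b₁ q₃ * gaussG a₂ b₂ q₃ * gaussG a₂ b₃ q₃
          * kloosterman (-(((a₂ : ZMod q₃)⁻¹).val : ℤ) * q')
              (m * (((((q' / n : ℕ) : ZMod q₃)⁻¹).val : ℤ)) ^ 2) q₃) := by
  have hq'0 : q' ≠ 0 := by omega
  have hq₃0 : q₃ ≠ 0 := by omega
  obtain ⟨k, hk⟩ := hn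
  have hn0 : n ≠ 0 := by rintro rfl; simp at hk; omega
  have hk0 : k ≠ 0 := by rintro rfl; simp at hk; omega
  have hkdvd : k ∣ q' := ⟨n, by rw [hk]; ring⟩
  have hdiv : q' / n = k := by rw [hk, Nat.mul_div_cancel_left _ (Nat.pos_of_ne_zero hn0)]
  have hdiv2 : (q' * q₃) / n = k * q₃ := by
    rw [hk, mul_assoc, Nat.mul_div_cancel_left _ (Nat.pos_of_ne_zero hn0)]
  have hcok : k.Coprime q₃ := Nat.Coprime.coprime_dvd_left hkdvd hco
  haveI : NeZero q' := ⟨hq'0⟩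
  haveI : NeZero q₃ := ⟨hq₃0⟩
  haveI : NeZero (q' * q₃) := ⟨Nat.mul_ne_zero hq'0 hq₃0⟩
  haveI : NeZero k := ⟨hk0⟩
  rw [hdiv]
  unfold charSum
  rw [hdiv2]
  rw [Finset.sum_mul_sum, ← Finset.sum_product']
  -- membership and injectivity helpers
  have hmem : ∀ a ∈ (Finset.range (q'*q₃)).filter (fun a => Nat.gcd a (q'*q₃) = 1),
      ((a * q₃) % q', (a * q') % q₃) ∈
        ((Finset.range q').filter (fun x => Nat.gcd x q' = 1)) ×ˢ
        ((Finset.range q₃).filter (fun x => Nat.gcd x q₃ = 1)) := by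
    intro a ha
    have hacop : Nat.Coprime a (q'*q₃) := (Finset.mem_filter.mp ha).2
    have h1 : Nat.Coprime a q' := Nat.Coprime.coprime_dvd_right (dvd_mul_right q' q₃) hacop
    have h2 : Nat.Coprime a q₃ := Nat.Coprime.coprime_dvd_right (dvd_mul_left q₃ q') hacop
    refine Finset.mem_product.mpr ⟨Finset.mem_filter.mpr ⟨Finset.mem_range.mpr
      (Nat.mod_lt _ (Nat.pos_of_ne_zero hq'0)), ?_⟩,
      Finset.mem_filter.mpr ⟨Finset.mem_range.mpr (Nat.mod_lt _ (Nat.pos_of_ne_zero hq₃0)), ?_⟩⟩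
    · exact coprime_mod _ _ (Nat.Coprime.mul h1 hco.symm)
    · exact coprime_mod _ _ (Nat.Coprime.mul h2 hco)
  have hinj : ∀ a₁' ∈ (Finset.range (q'*q₃)).filter (fun a => Nat.gcd a (q'*q₃) = 1),
      ∀ a₂' ∈ (Finset.range (q'*q₃)).filter (fun a => Nat.gcd a (q'*q₃) = 1),
      ((a₁' * q₃) % q', (a₁' * q') % q₃) = ((a₂' * q₃) % q', (a₂' * q') % q₃) → a₁' = a₂' := by
    intro x hx y hy hxy
    injection hxy with h1 h2
    have e1 : x ≡ y [MOD q'] :=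
      (Nat.ModEq.cancel_right_of_coprime (by rw [Nat.Coprime] at hco; exact hco) h1)
    have e2 : x ≡ y [MOD q₃] :=
      (Nat.ModEq.cancel_right_of_coprime (by rw [Nat.gcd_comm]; exact hco) h2)
    have e3 : x ≡ y [MOD q'*q₃] := (Nat.modEq_and_modEq_iff_modEq_mul hco).mp ⟨e1, e2⟩
    exact Nat.ModEq.eq_of_lt_of_lt e3
      (Finset.mem_range.mp (Finset.mem_filter.mp hx).1)
      (Finset.mem_range.mp (Finset.mem_filter.mp hy).1)
  apply Finset.sum_bij (fun a _ => ((a * q₃) % q', (a * q') % q₃)) hmem hinj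
  · intro b hb
    have hcard : (((Finset.range q').filter (fun x => Nat.gcd x q' = 1)) ×ˢ
        ((Finset.range q₃).filter (fun x => Nat.gcd x q₃ = 1))).card ≤
        ((Finset.range (q'*q₃)).filter (fun a => Nat.gcd a (q'*q₃) = 1)).card := by
      rw [Finset.card_product, filter_card, filter_card, filter_card, Nat.totient_mul hco]
    obtain ⟨a, ha, hab⟩ := Finset.surj_on_of_inj_on_of_card_le
      (fun a _ => ((a * q₃) % q', (a * q') % q₃)) hmem (fun x y hx hy h => hinj x hx y hy h) hcard b hb
    exact ⟨a, ha, hab.symm⟩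
  · intro a ha
    dsimp only
    have hacop : Nat.Coprime a (q'*q₃) := (Finset.mem_filter.mp ha).2
    have ha1cop : Nat.Coprime a q' := Nat.Coprime.coprime_dvd_right (dvd_mul_right q' q₃) hacop
    have ha2cop : Nat.Coprime a q₃ := Nat.Coprime.coprime_dvd_right (dvd_mul_left q₃ q') hacop
    have hakcop : Nat.Coprime a k := Nat.Coprime.coprime_dvd_right (dvd_mul_of_dvd_left hkdvd q₃) hacop
    set a₁ := a * q₃ % q' with ha₁def
    set a₂ := a * q' % q₃ with ha₂def
    have hc1 : Nat.Coprime a₁ q' := coprime_mod _ _ (Nat.Coprime.mul ha1cop hco.symm)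
    have hc2 : Nat.Coprime a₂ q₃ := coprime_mod _ _ (Nat.Coprime.mul ha2cop hco)
    have hA1 : ((a₁ : ℕ) : ZMod q') = (a : ZMod q') * q₃ := by
      rw [ha₁def, ZMod.natCast_mod]; push_cast; ring
    have hA1k : ((a₁ : ℕ) : ZMod k) = (a : ZMod k) * q₃ := by
      have h1 : a₁ ≡ a * q₃ [MOD k] := (Nat.mod_modEq _ _).of_dvd hkdvd
      rw [(ZMod.natCast_eq_natCast_iff _ _ _).mpr h1]; push_cast; ring
    have hA2 : ((a₂ : ℕ) : ZMod q₃) = (a : ZMod q₃) * q' := by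
      rw [ha₂def, ZMod.natCast_mod]; push_cast; ring
    have hIa1 : (a : ZMod q') * ((((a : ZMod (q'*q₃))⁻¹).val : ZMod q')) = 1 :=
      mul_val_inv_cast (dvd_mul_right q' q₃) a hacop
    have hIa2 : (a : ZMod q₃) * ((((a : ZMod (q'*q₃))⁻¹).val : ZMod q₃)) = 1 :=
      mul_val_inv_cast (dvd_mul_left q₃ q') a hacop
    have hIak : (a : ZMod k) * ((((a : ZMod (q'*q₃))⁻¹).val : ZMod k)) = 1 :=
      mul_val_inv_cast (dvd_mul_of_dvd_left hkdvd q₃) a hacop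
    have hI11 : (a₁ : ZMod q') * ((((a₁ : ZMod q')⁻¹).val : ZMod q')) = 1 :=
      mul_val_inv_cast dvd_rfl a₁ hc1
    have hI1k : (a₁ : ZMod k) * ((((a₁ : ZMod q')⁻¹).val : ZMod k)) = 1 :=
      mul_val_inv_cast hkdvd a₁ hc1
    have hI22 : (a₂ : ZMod q₃) * ((((a₂ : ZMod q₃)⁻¹).val : ZMod q₃)) = 1 :=
      mul_val_inv_cast dvd_rfl a₂ hc2
    have hu1 : IsUnit (a : ZMod q') := (ZMod.isUnit_iff_coprime a q').mpr ha1cop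
    have hu2 : IsUnit (a : ZMod q₃) := (ZMod.isUnit_iff_coprime a q₃).mpr ha2cop
    have huk : IsUnit (a : ZMod k) := (ZMod.isUnit_iff_coprime a k).mpr hakcop
    have hkey1 : ((((a : ZMod (q'*q₃))⁻¹).val : ZMod q'))
        = ((((a₁ : ZMod q')⁻¹).val : ZMod q')) * (q₃ : ZMod q') := by
      apply hu1.mul_left_cancel
      rw [hIa1]
      calc (1 : ZMod q')
          = (a₁ : ZMod q') * ((((a₁ : ZMod q')⁻¹).val : ZMod q')) := hI11.symm
        _ = (a : ZMod q') * (((((a₁ : ZMod q')⁻¹).val : ZMod q')) * (q₃ : ZMod q')) := by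
            rw [hA1]; ring
    have hkeyk : ((((a : ZMod (q'*q₃))⁻¹).val : ZMod k))
        = ((((a₁ : ZMod q')⁻¹).val : ZMod k)) * (q₃ : ZMod k) := by
      apply huk.mul_left_cancel
      rw [hIak]
      calc (1 : ZMod k)
          = (a₁ : ZMod k) * ((((a₁ : ZMod q')⁻¹).val : ZMod k)) := hI1k.symm
        _ = (a : ZMod k) * (((((a₁ : ZMod q')⁻¹).val : ZMod k)) * (q₃ : ZMod k)) := by
            rw [hA1k]; ring
    have hkey2 : ((((a : ZMod (q'*q₃))⁻¹).val : ZMod q₃))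
        = ((((a₂ : ZMod q₃)⁻¹).val : ZMod q₃)) * (q' : ZMod q₃) := by
      apply hu2.mul_left_cancel
      rw [hIa2]
      calc (1 : ZMod q₃)
          = (a₂ : ZMod q₃) * ((((a₂ : ZMod q₃)⁻¹).val : ZMod q₃)) := hI22.symm
        _ = (a : ZMod q₃) * (((((a₂ : ZMod q₃)⁻¹).val : ZMod q₃)) * (q' : ZMod q₃)) := by
            rw [hA2]; ring
    -- gauss factors
    have hg₁ : ((a₁ : ℤ) : ZMod q') = (((a : ℤ) * q₃ : ℤ) : ZMod q') := by
      push_cast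
      rw [hA1]
    have hg₂ : ((a₂ : ℤ) : ZMod q₃) = (((a : ℤ) * q' : ℤ) : ZMod q₃) := by
      push_cast
      rw [hA2]
    have hG : ∀ b : ℤ, gaussG (a : ℤ) b (q'*q₃) = gaussG (a₁ : ℤ) b q' * gaussG (a₂ : ℤ) b q₃ :=
      fun b => gauss_split q' q₃ hq'0 hq₃0 hco a b a₁ a₂ hg₁ hg₂
    -- kloosterman factor
    have hk₁ : ((-((((a₁ : ZMod q')⁻¹).val : ℤ)) * q₃ : ℤ) : ZMod k)
        = ((-((((a : ZMod (q'*q₃))⁻¹).val : ℤ)) : ℤ) : ZMod k) := by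
      push_cast
      rw [hkeyk]; ring
    have hk₂ : ((-((((a₂ : ZMod q₃)⁻¹).val : ℤ)) * q' : ℤ) : ZMod q₃)
        = ((-((((a : ZMod (q'*q₃))⁻¹).val : ℤ)) : ℤ) : ZMod q₃) := by
      push_cast
      rw [hkey2]; ring
    have hK := klo_split k q₃ hk0 hq₃0 hcok
      (-((((a : ZMod (q'*q₃))⁻¹).val : ℤ))) m
      (-((((a₁ : ZMod q')⁻¹).val : ℤ)) * q₃)
      (-((((a₂ : ZMod q₃)⁻¹).val : ℤ)) * q') hk₁ hk₂
    -- exponential factor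
    have hneg : ∀ (y : ℤ) (c : ℝ), -((y : ℝ)/c) = ((-y : ℤ) : ℝ)/c := by
      intro y c; push_cast; ring
    have hEA : ((-(((((a : ZMod (q'*q₃))⁻¹).val : ℤ)) * v) : ℤ) : ZMod q')
        = (((-(((((a₁ : ZMod q')⁻¹).val : ℤ)) * v)) * q₃ : ℤ) : ZMod q') := by
      push_cast
      rw [hkey1]; ring
    have hEB : ((-(((((a : ZMod (q'*q₃))⁻¹).val : ℤ)) * v) : ℤ) : ZMod q₃)
        = (((-(((((a₂ : ZMod q₃)⁻¹).val : ℤ)) * v)) * q' : ℤ) : ZMod q₃) := by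
      push_cast
      rw [hkey2]; ring
    have hE := e_split q' q₃ hq'0 hq₃0 hco
      (-(((((a : ZMod (q'*q₃))⁻¹).val : ℤ)) * v))
      (-(((((a₁ : ZMod q')⁻¹).val : ℤ)) * v))
      (-(((((a₂ : ZMod q₃)⁻¹).val : ℤ)) * v)) hEA hEB
    simp only [hneg]
    rw [hE, hG b₁, hG b₂, hG b₃, hK]
    ring
end

section
/- For x ≥ 6 and ℓ ∈ {0,1,2}, setting j₀ = ⌊log x / log 2⌋, the quantity R_ℓ(x) = ∑_{i=0}^{ℓ} binom(ℓ,i) (log x)^{ℓ−i} ∫_{−∞}^{∞} (∫₀^{3/2^{j₀}} (log u)^i e(−βu) du) (∫₀^1 e(βv²) dv)³ dβ satisfies |R_ℓ(x)| ≪_ℓ x^{−1} (log x)⁴. -/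
/-- The remainder
`R_ℓ(x) = ∑_{i=0}^{ℓ} C(ℓ,i) (log x)^{ℓ−i} ∫_ℝ (∫₀^{3/2^{j₀}} (log u)^i e(−βu) du)
(∫₀^1 e(βv²) dv)³ dβ` with `j₀ = ⌊log x / log 2⌋`. -/
noncomputable def Rrem (ℓ : ℕ) (x : ℝ) : ℂ :=
  ∑ i ∈ Finset.range (ℓ + 1),
    ((ℓ.choose i : ℝ) : ℂ) * ((Real.log x : ℝ) : ℂ) ^ (ℓ - i) *
      ∫ β : ℝ,
        (∫ u in (0 : ℝ)..(3 / 2 ^ (⌊Real.log x / Real.log 2⌋₊)),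
            ((Real.log u : ℝ) : ℂ) ^ i * e (-(β * u))) *
        (∫ v in (0 : ℝ)..1, e (β * v ^ 2)) ^ 3

/-!
The inner `u`-integral is at most `∫₀^δ |log u|^i du ≪ δ (1 + |log δ|)²` with `δ = 3/2^{j₀} ≍ 1/x`,
uniformly in `β`, so everything rests on the integrability of `|∫₀¹ e(βv²) dv|³` over `β ∈ ℝ`.
That follows from the decay `|∫₀¹ e(βv²) dv| ≪ |β|^{-1/2}`: the piece over `[0, |β|^{-1/2}]` is
trivially small, and on `[|β|^{-1/2}, 1]` one integration by parts against
`d e(βv²) = 4πiβv e(βv²) dv` gains the factor `1/(|β| v)`.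
-/

open MeasureTheory intervalIntegral Set Real
open Complex (I)
open scoped Interval

theorem norm_e (t : ℝ) : ‖e t‖ = 1 := by
  simp [e, Complex.norm_exp]

theorem continuous_e : Continuous e := by
  unfold e; fun_prop

theorem hasDerivAt_e (t : ℝ) : HasDerivAt e (2 * π * I * e t) t := by
  have h := ((hasDerivAt_id t).ofReal_comp.const_mul (2 * π * I)).cexp
  simp only [id, Complex.ofReal_one, mul_one] at h
  rw [mul_comm]
  exact h

theorem hasDerivAt_e_mul_sq (β v : ℝ) :
    HasDerivAt (fun v => e (β * v ^ 2)) (4 * π * I * β * v * e (β * v ^ 2)) v := by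
  refine ((hasDerivAt_e (β * v ^ 2)).scomp v ((hasDerivAt_pow 2 v).const_mul β)).congr_deriv ?_
  rw [Complex.real_smul]; push_cast; ring

theorem intervalIntegrable_inv_sq {a b : ℝ} (ha : 0 < a) (hab : a ≤ b) :
    IntervalIntegrable (fun v : ℝ => (v ^ 2)⁻¹) volume a b :=
  intervalIntegrable_inv (fun v hv => pow_ne_zero 2 (ha.trans_le (uIcc_of_le hab ▸ hv).1).ne')
    (by fun_prop)

theorem integral_inv_sq {a b : ℝ} (ha : 0 < a) (hab : a ≤ b) :
    ∫ v in a..b, (v ^ 2)⁻¹ = a⁻¹ - b⁻¹ := by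
  have hpos : ∀ v ∈ [[a, b]], 0 < v := fun v hv => ha.trans_le (uIcc_of_le hab ▸ hv).1
  rw [integral_eq_sub_of_hasDerivAt (f := fun v => -v⁻¹)
    (fun v hv => by simpa using (hasDerivAt_inv (hpos v hv).ne').fun_neg)
    (intervalIntegrable_inv_sq ha hab)]
  ring

theorem norm_integral_e_mul_sq_le {β a b : ℝ} (hβ : β ≠ 0) (ha : 0 < a) (hab : a ≤ b) :
    ‖∫ v in a..b, e (β * v ^ 2)‖ ≤ (2 * π * |β| * a)⁻¹ := by
  set c : ℂ := 4 * π * I * β with hc_def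
  have hc : ‖c‖ = 4 * π * |β| := by simp [hc_def, abs_of_pos pi_pos]
  have hc0 : c ≠ 0 := by simp [hc_def, hβ, pi_ne_zero]
  have hpos : ∀ v ∈ [[a, b]], 0 < v := fun v hv => ha.trans_le (uIcc_of_le hab ▸ hv).1
  have hu : ∀ v ∈ [[a, b]], HasDerivAt (fun v : ℝ => c⁻¹ * (v : ℂ)⁻¹) (-c⁻¹ * ((v : ℂ) ^ 2)⁻¹) v :=
    fun v hv => by
      simpa [neg_mul, mul_neg] using
        ((hasDerivAt_inv (Complex.ofReal_ne_zero.2 (hpos v hv).ne')).comp_ofReal).const_mul c⁻¹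
  have hu' : IntervalIntegrable (fun v : ℝ => -c⁻¹ * ((v : ℂ) ^ 2)⁻¹) volume a b :=
    ContinuousOn.intervalIntegrable (continuousOn_const.mul (ContinuousOn.inv₀ (by fun_prop)
      fun v hv => pow_ne_zero 2 (Complex.ofReal_ne_zero.2 (hpos v hv).ne')))
  have hφ' : IntervalIntegrable (fun v : ℝ => c * v * e (β * v ^ 2)) volume a b :=
    (Continuous.intervalIntegrable (by have := continuous_e; fun_prop) _ _)
  -- integrate `(cv)⁻¹ · (cv e(βv²))` by parts, the second factor being the derivative of `e(βv²)`
  have ibp := integral_mul_deriv_eq_deriv_mul hu (fun v _ => hasDerivAt_e_mul_sq β v) hu' hφ'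
  have hlhs : ∫ v in a..b, c⁻¹ * (v : ℂ)⁻¹ * (c * v * e (β * v ^ 2)) = ∫ v in a..b, e (β * v ^ 2) :=
    integral_congr fun v hv => by
      field_simp [hc0, Complex.ofReal_ne_zero.2 (hpos v hv).ne']
  have hrem : ‖∫ v in a..b, -c⁻¹ * ((v : ℂ) ^ 2)⁻¹ * e (β * v ^ 2)‖ ≤ ‖c‖⁻¹ * (a⁻¹ - b⁻¹) := by
    rw [← integral_inv_sq ha hab, ← intervalIntegral.integral_const_mul]
    exact norm_integral_le_of_norm_le hab (ae_of_all _ fun v _ => by simp [norm_e])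
      ((intervalIntegrable_inv_sq ha hab).const_mul _)
  have hbdry : ∀ v : ℝ, 0 < v → ‖c⁻¹ * (v : ℂ)⁻¹ * e (β * v ^ 2)‖ = ‖c‖⁻¹ * v⁻¹ := fun v hv => by
    simp [norm_e, abs_of_pos hv]
  rw [← hlhs, ibp]
  calc _ ≤ ‖c‖⁻¹ * b⁻¹ + ‖c‖⁻¹ * a⁻¹ + ‖c‖⁻¹ * (a⁻¹ - b⁻¹) := by
        refine (norm_sub_le _ _).trans (add_le_add ((norm_sub_le _ _).trans ?_) hrem)
        rw [hbdry a ha, hbdry b (ha.trans_le hab)]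
    _ = (2 * π * |β| * a)⁻¹ := by
        rw [hc]; field_simp; ring

noncomputable def weylIntegral (β : ℝ) : ℂ := ∫ v in (0 : ℝ)..1, e (β * v ^ 2)

theorem continuous_weylIntegral : Continuous weylIntegral :=
  continuous_parametric_intervalIntegral_of_continuous' (f := fun β v => e (β * v ^ 2))
    (continuous_e.comp (continuous_fst.mul (continuous_snd.pow 2))) 0 1

theorem norm_integral_e_le (f : ℝ → ℝ) (a b : ℝ) : ‖∫ v in a..b, e (f v)‖ ≤ |b - a| :=
  (norm_integral_le_of_norm_le_const fun v _ => (norm_e (f v)).le).trans_eq (one_mul _)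

theorem norm_weylIntegral_le_of_one_le_abs {β : ℝ} (hβ : 1 ≤ |β|) :
    ‖weylIntegral β‖ ≤ 2 / √|β| := by
  have hs : 0 < √|β| := sqrt_pos.2 (one_pos.trans_le hβ)
  have ha1 : (√|β|)⁻¹ ≤ 1 := inv_le_one_of_one_le₀ (one_le_sqrt.2 hβ)
  have hcont : ∀ a b : ℝ, IntervalIntegrable (fun v => e (β * v ^ 2)) volume a b :=
    fun a b => (continuous_e.comp (by fun_prop)).intervalIntegrable a b
  rw [weylIntegral, ← integral_add_adjacent_intervals (hcont 0 (√|β|)⁻¹) (hcont _ 1)]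
  have hhead := norm_integral_e_le (fun v => β * v ^ 2) 0 (√|β|)⁻¹
  have htail := norm_integral_e_mul_sq_le (abs_pos.1 (one_pos.trans_le hβ)) (inv_pos.2 hs) ha1
  have htail' : (2 * π * |β| * (√|β|)⁻¹)⁻¹ ≤ (√|β|)⁻¹ := by
    rw [inv_le_inv₀ (by positivity) hs, ← div_eq_mul_inv, le_div_iff₀ hs,
      mul_self_sqrt (abs_nonneg β)]
    nlinarith [pi_gt_three]
  calc _ ≤ _ := norm_add_le _ _
    _ ≤ (√|β|)⁻¹ + (√|β|)⁻¹ := by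
        gcongr
        · simpa [abs_of_pos hs] using hhead
        · exact htail.trans htail'
    _ = 2 / √|β| := by ring

theorem norm_weylIntegral_le (β : ℝ) : ‖weylIntegral β‖ ≤ 3 / √(1 + |β|) := by
  have ht : 0 < √(1 + |β|) := sqrt_pos.2 (by positivity)
  have hsq := sq_sqrt (by positivity : (0 : ℝ) ≤ 1 + |β|)
  rcases le_or_gt 1 |β| with hβ | hβ
  · have hs : 0 < √|β| := sqrt_pos.2 (one_pos.trans_le hβ)
    have hsq' := sq_sqrt (abs_nonneg β)
    refine (norm_weylIntegral_le_of_one_le_abs hβ).trans ?_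
    rw [div_le_div_iff₀ hs ht]
    nlinarith
  · refine (norm_integral_e_le (fun v => β * v ^ 2) 0 1).trans ?_
    rw [sub_zero, abs_one, le_div_iff₀ ht]
    nlinarith

theorem norm_weylIntegral_pow_three_le (β : ℝ) :
    ‖weylIntegral β‖ ^ 3 ≤ 27 * (1 + |β|) ^ (-(3 / 2 : ℝ)) := by
  have ht : 0 ≤ 1 + |β| := by positivity
  have hcube : (3 / √(1 + |β|)) ^ 3 = 27 * (1 + |β|) ^ (-(3 / 2 : ℝ)) := by
    rw [div_pow, sqrt_eq_rpow, ← rpow_natCast ((1 + |β|) ^ (1 / 2 : ℝ)) 3, ← rpow_mul ht,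
      rpow_neg ht]
    norm_num [div_eq_mul_inv]
  exact hcube ▸ pow_le_pow_left₀ (norm_nonneg _) (norm_weylIntegral_le β) 3

theorem integrable_norm_weylIntegral_pow_three :
    Integrable fun β => ‖weylIntegral β‖ ^ 3 := by
  refine Integrable.mono' ((integrable_one_add_norm (r := 3 / 2) (by norm_num)).const_mul 27)
    (continuous_weylIntegral.norm.pow 3).aestronglyMeasurable (ae_of_all _ fun β => ?_)
  rw [Real.norm_of_nonneg (by positivity)]
  exact norm_weylIntegral_pow_three_le β

theorem norm_integral_mul_weylIntegral_pow_three_le {f : ℝ → ℂ} {M : ℝ} (hf : ∀ β, ‖f β‖ ≤ M) :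
    ‖∫ β, f β * weylIntegral β ^ 3‖ ≤ M * ∫ β, ‖weylIntegral β‖ ^ 3 := by
  rw [← MeasureTheory.integral_const_mul]
  refine (MeasureTheory.norm_integral_le_integral_norm _).trans (integral_mono_of_nonneg
    (ae_of_all _ fun β => norm_nonneg _) (integrable_norm_weylIntegral_pow_three.const_mul M)
    (ae_of_all _ fun β => ?_))
  simp only [norm_mul, norm_pow]
  exact mul_le_mul_of_nonneg_right (hf β) (by positivity)

/-- From `log t = log δ - log (δ/t)` and `log y ≤ 4 y^{1/4}`; the exponent `1/2 < 1` keeps the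
bound integrable at `t = 0`. -/
theorem abs_log_pow_le {t δ : ℝ} (ht : 0 < t) (htδ : t ≤ δ) {i : ℕ} (hi : i ≤ 2) :
    |log t| ^ i ≤ 2 * (1 + |log δ|) ^ 2 + 32 * (δ / t) ^ (1 / 2 : ℝ) := by
  have hδt : 1 ≤ δ / t := (one_le_div ht).2 htδ
  have hlog_le : log (δ / t) ≤ 4 * (δ / t) ^ (1 / 4 : ℝ) := by
    have := log_le_rpow_div (zero_le_one.trans hδt) (by norm_num : (0 : ℝ) < 1 / 4)
    linarith
  have hsq : ((δ / t) ^ (1 / 4 : ℝ)) ^ 2 = (δ / t) ^ (1 / 2 : ℝ) := by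
    rw [← rpow_natCast, ← rpow_mul (zero_le_one.trans hδt)]; norm_num
  have habs : |log t| ≤ |log δ| + log (δ / t) := by
    have := log_le_log ht htδ
    rw [log_div (ht.trans_le htδ).ne' ht.ne']
    exact abs_le.2 ⟨by linarith [neg_abs_le (log δ)], by linarith [le_abs_self (log δ)]⟩
  have hpow : |log t| ^ i ≤ (1 + |log t|) ^ 2 :=
    (pow_le_pow_left₀ (abs_nonneg _) (le_add_of_nonneg_left zero_le_one) i).trans
      (pow_le_pow_right₀ (le_add_of_nonneg_right (abs_nonneg _)) hi)
  have hle : 1 + |log t| ≤ (1 + |log δ|) + 4 * (δ / t) ^ (1 / 4 : ℝ) := by linarith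
  calc |log t| ^ i ≤ (1 + |log t|) ^ 2 := hpow
    _ ≤ ((1 + |log δ|) + 4 * (δ / t) ^ (1 / 4 : ℝ)) ^ 2 := pow_le_pow_left₀ (by positivity) hle 2
    _ ≤ 2 * (1 + |log δ|) ^ 2 + 32 * ((δ / t) ^ (1 / 4 : ℝ)) ^ 2 := by
        nlinarith [sq_nonneg (1 + |log δ| - 4 * (δ / t) ^ (1 / 4 : ℝ))]
    _ = 2 * (1 + |log δ|) ^ 2 + 32 * (δ / t) ^ (1 / 2 : ℝ) := by rw [hsq]

theorem norm_integral_log_pow_mul_e_le {δ : ℝ} (hδ : 0 < δ) {i : ℕ} (hi : i ≤ 2) (β : ℝ) :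
    ‖∫ u in (0 : ℝ)..δ, ((log u : ℝ) : ℂ) ^ i * e (-(β * u))‖ ≤
      (2 * (1 + |log δ|) ^ 2 + 64) * δ := by
  have hrpow : IntervalIntegrable (fun t : ℝ => t ^ (-(1 / 2) : ℝ)) volume 0 δ :=
    intervalIntegrable_rpow' (by norm_num)
  calc _ ≤ ∫ t in (0 : ℝ)..δ,
        2 * (1 + |log δ|) ^ 2 + 32 * δ ^ (1 / 2 : ℝ) * t ^ (-(1 / 2) : ℝ) := by
        refine norm_integral_le_of_norm_le hδ.le (ae_of_all _ fun t ht => ?_)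
          (intervalIntegrable_const.add (hrpow.const_mul _))
        rw [norm_mul, norm_e, mul_one, norm_pow, Complex.norm_real, norm_eq_abs, mul_assoc,
          rpow_neg ht.1.le, ← div_eq_mul_inv, ← div_rpow hδ.le ht.1.le]
        exact abs_log_pow_le ht.1 ht.2 hi
    _ = (2 * (1 + |log δ|) ^ 2 + 64) * δ := by
        rw [integral_add intervalIntegrable_const (hrpow.const_mul _),
          intervalIntegral.integral_const, intervalIntegral.integral_const_mul, integral_rpow (Or.inl (by norm_num)),
          zero_rpow (by norm_num), smul_eq_mul]
        have : δ ^ (1 / 2 : ℝ) * δ ^ (1 / 2 : ℝ) = δ := by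
          rw [← rpow_add hδ]; norm_num
        norm_num
        linear_combination 64 * this

theorem two_pow_floor_log_div_log_two_le {x : ℝ} (hx : 1 ≤ x) :
    (2 : ℝ) ^ ⌊log x / log 2⌋₊ ≤ x := by
  rw [← rpow_natCast, ← le_logb_iff_rpow_le one_lt_two (one_pos.trans_le hx)]
  exact Nat.floor_le (div_nonneg (log_nonneg hx) (log_nonneg one_le_two))

theorem lt_two_pow_floor_log_div_log_two_succ {x : ℝ} (hx : 0 < x) :
    x < (2 : ℝ) ^ (⌊log x / log 2⌋₊ + 1) := by
  rw [← rpow_natCast, ← logb_lt_iff_lt_rpow one_lt_two hx, Nat.cast_succ]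
  exact Nat.lt_floor_add_one _

noncomputable def cutoff (x : ℝ) : ℝ := 3 / 2 ^ ⌊log x / log 2⌋₊

theorem cutoff_pos (x : ℝ) : 0 < cutoff x := by
  unfold cutoff; positivity

theorem cutoff_le {x : ℝ} (hx : 0 < x) : cutoff x ≤ 6 / x := by
  have := lt_two_pow_floor_log_div_log_two_succ hx
  rw [pow_succ] at this
  rw [cutoff, div_le_div_iff₀ (by positivity) hx]
  linarith

theorem inv_le_cutoff {x : ℝ} (hx : 1 ≤ x) : x⁻¹ ≤ cutoff x := by
  have := two_pow_floor_log_div_log_two_le hx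
  rw [cutoff, inv_eq_one_div, div_le_div_iff₀ (by linarith) (by positivity)]
  linarith

theorem abs_log_cutoff_le {x : ℝ} (hx : 6 ≤ x) : |log (cutoff x)| ≤ log x := by
  have hx0 : 0 < x := by linarith
  refine abs_le.2 ⟨?_, ?_⟩
  · rw [← log_inv]
    exact log_le_log (by positivity) (inv_le_cutoff (by linarith))
  · exact (log_nonpos (cutoff_pos x).le ((cutoff_le hx0).trans ((div_le_one hx0).2 hx))).trans
      (log_nonneg (by linarith))

theorem one_le_log_of_six_le {x : ℝ} (hx : 6 ≤ x) : 1 ≤ log x := by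
  rw [le_log_iff_exp_le (by linarith)]
  linarith [exp_one_lt_d9]

theorem norm_integral_log_pow_mul_e_cutoff_le {x : ℝ} (hx : 6 ≤ x) {i : ℕ} (hi : i ≤ 2)
    (β : ℝ) :
    ‖∫ u in (0 : ℝ)..cutoff x, ((log u : ℝ) : ℂ) ^ i * e (-(β * u))‖ ≤
      432 * x⁻¹ * log x ^ 2 := by
  have hlog := abs_log_cutoff_le hx
  have hδ := cutoff_le (by linarith : 0 < x)
  have h1 := one_le_log_of_six_le hx
  have hδ0 := cutoff_pos x
  refine (norm_integral_log_pow_mul_e_le hδ0 hi β).trans ?_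
  calc _ ≤ (2 * (1 + log x) ^ 2 + 64) * (6 / x) := by gcongr
    _ ≤ (2 * (2 * log x) ^ 2 + 64 * log x ^ 2) * (6 / x) := by gcongr <;> nlinarith
    _ = 432 * x⁻¹ * log x ^ 2 := by ring

theorem norm_sum_choose_mul_pow_mul_le {ℓ : ℕ} {L B : ℝ} (hL : 0 ≤ L) {J : ℕ → ℂ}
    (hJ : ∀ i ≤ ℓ, ‖J i‖ ≤ B) :
    ‖∑ i ∈ Finset.range (ℓ + 1), ((ℓ.choose i : ℝ) : ℂ) * ((L : ℝ) : ℂ) ^ (ℓ - i) * J i‖ ≤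
      (1 + L) ^ ℓ * B := by
  calc _ ≤ ∑ i ∈ Finset.range (ℓ + 1), (ℓ.choose i : ℝ) * L ^ (ℓ - i) * B := by
        refine (norm_sum_le _ _).trans (Finset.sum_le_sum fun i hi => ?_)
        rw [norm_mul, norm_mul, norm_pow, Complex.norm_real, Complex.norm_real,
          norm_of_nonneg (Nat.cast_nonneg _), norm_of_nonneg hL]
        gcongr
        exact hJ i (Nat.lt_succ_iff.1 (Finset.mem_range.1 hi))
    _ = (1 + L) ^ ℓ * B := by
        rw [← Finset.sum_mul, add_pow]
        exact congrArg (· * B) (Finset.sum_congr rfl fun i _ => by ring)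

/-- `|R_ℓ(x)| ≪_ℓ x⁻¹ (log x)⁴` for `x ≥ 6` and `ℓ ∈ {0,1,2}`. -/
theorem Rrem_bound : ∀ ℓ : ℕ, ℓ ≤ 2 → ∃ C : ℝ, 0 < C ∧
    ∀ x : ℝ, 6 ≤ x → ‖Rrem ℓ x‖ ≤ C * x⁻¹ * (Real.log x) ^ 4 := by
  intro ℓ hℓ
  set K := ∫ β, ‖weylIntegral β‖ ^ 3
  have hK : 0 ≤ K := integral_nonneg fun β => by positivity
  refine ⟨1728 * K + 1, by positivity, fun x hx => ?_⟩
  have hlog := one_le_log_of_six_le hx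
  calc ‖Rrem ℓ x‖ ≤ (1 + log x) ^ ℓ * (432 * x⁻¹ * log x ^ 2 * K) :=
        norm_sum_choose_mul_pow_mul_le (by linarith) fun i hi =>
          norm_integral_mul_weylIntegral_pow_three_le
            (norm_integral_log_pow_mul_e_cutoff_le hx (hi.trans hℓ))
    _ ≤ (2 * log x) ^ 2 * (432 * x⁻¹ * log x ^ 2 * K) := by
        gcongr
        exact (pow_le_pow_left₀ (by positivity) (by linarith) ℓ).trans
          (pow_le_pow_right₀ (by linarith) hℓ)
    _ = 1728 * K * x⁻¹ * log x ^ 4 := by ring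
    _ ≤ (1728 * K + 1) * x⁻¹ * log x ^ 4 := by gcongr; linarith
end
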